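/- For the autonomous Lagrangian L_a(x,y,ẋ,ẏ) = (1/2)ẋ² + 1 − cos(2πx) + (1/2)(ẏ−c)² on 𝕋² = ℝ²/ℤ² and the function u_δ with 0 < δ < 1/2: T_t u_δ(π(0,1/2)) → 0 as t → +∞, yet there exists a sequence t_n → +∞ such that T_{t_n} u_δ(π(0,1/2)) ≥ δ²/(32 t_n) for every n; hence the convergence of the Lax–Oleinik semigroup at the point π(0,1/2) is not faster than O(1/t). -/

import Mathlib

open Set Filter MeasureTheory

noncomputable section

/-- The two-torus `𝕋² = ℝ²/ℤ²`. -/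
abbrev T2 : Type := AddCircle (1 : ℝ) × AddCircle (1 : ℝ)

/-- The quotient map `π : ℝ² → 𝕋²`. -/
def p2 (q : ℝ × ℝ) : T2 := ((q.1 : AddCircle (1 : ℝ)), (q.2 : AddCircle (1 : ℝ)))

/-- `γ` is continuous and piecewise `C¹` on `[a,b]`. -/
def PiecewiseC1On {E : Type*} [NormedAddCommGroup E] [NormedSpace ℝ E]
    (γ : ℝ → E) (a b : ℝ) : Prop :=
  ContinuousOn γ (Set.Icc a b) ∧
  ∃ (N : ℕ) (p : Fin (N + 1) → ℝ), p 0 = a ∧ p (Fin.last N) = b ∧ Monotone p ∧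
    ∀ i : Fin N, ContDiffOn ℝ 1 γ (Set.Icc (p i.castSucc) (p i.succ))

/-- The Lagrangian `L_a(x,y,ẋ,ẏ) = ẋ²/2 + 1 − cos(2πx) + (ẏ−c)²/2`. -/
def La (c : ℝ) (q v : ℝ × ℝ) : ℝ :=
  (1 / 2) * v.1 ^ 2 + 1 - Real.cos (2 * Real.pi * q.1) + (1 / 2) * (v.2 - c) ^ 2

/-- The action of a curve for `L_a` on `[a,b]`. -/
def actionA (c : ℝ) (γ : ℝ → ℝ × ℝ) (a b : ℝ) : ℝ :=
  ∫ s in a..b, La c (γ s) (deriv γ s)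

/-- The Lax–Oleinik semigroup `T_t u (q)` for `L_a`. -/
def Tlo (c t : ℝ) (u : T2 → ℝ) (q : T2) : ℝ :=
  sInf {A : ℝ | ∃ γ : ℝ → ℝ × ℝ, PiecewiseC1On γ 0 t ∧ p2 (γ t) = q ∧
    A = u (p2 (γ 0)) + actionA c γ 0 t}

/-- `F_t(q,q')`: minimal action among curves from `q` to `q'` in time `t`. -/
def Fa (c t : ℝ) (q q' : T2) : ℝ :=
  sInf {A : ℝ | ∃ γ : ℝ → ℝ × ℝ, PiecewiseC1On γ 0 t ∧ p2 (γ 0) = q ∧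
    p2 (γ t) = q' ∧ A = actionA c γ 0 t}

/-- The Peierls barrier `h(q,q') = liminf_{t→+∞} F_t(q,q')`, written as
`sup over T of inf over t ≥ T`. -/
def hA (c : ℝ) (q q' : T2) : ℝ :=
  sSup {r : ℝ | ∃ T : ℝ, r = sInf {A : ℝ | ∃ t : ℝ, 0 < t ∧ T ≤ t ∧ A = Fa c t q q'}}

/-- The circle `{0} × 𝕊¹ ⊆ 𝕋²`. -/
def circ0 : Set T2 := {q : T2 | ∃ yt : ℝ, q = p2 (0, yt)}

/-- The function `u_δ(π(x̃,ỹ)) = max(δ − dist(ỹ − 1/2, ℤ), 0)`. -/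
def udelta (δ : ℝ) (q : T2) : ℝ :=
  max (δ - ‖q.2 - ((1 / 2 : ℝ) : AddCircle (1 : ℝ))‖) 0


/-! Completing the square in `ẏ − c` shows that every curve on `[0, t]` has action at least
`D² / (2t)`, where `D = y(t) − y(0) − c t` is its deviation from the free drift. A straight
segment from a zero of `u_δ` to a lift of `π(0, 1/2)` has `|D| ≤ 1/2`, so `T_t u_δ ≤ 1/(8t) → 0`.
When `c t ∈ ℤ`, however, a curve ending at `π(0, 1/2)` starts at height `1/2 − D` modulo `1`,
where `u_δ ≥ δ − |D|`; minimizing `max (δ − |D|) 0 + D² / (2t)` over `D` gives `δ² / (2t)` as soon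
as `t ≥ δ`, and such times `t` are unbounded. -/

open intervalIntegral

section PiecewiseC1

variable {E G : Type*} [NormedAddCommGroup E] [NormedSpace ℝ E]
  [NormedAddCommGroup G] {γ : ℝ → E} {a b : ℝ}

theorem ContDiffOn.hasDerivAt_deriv_of_mem_Ioo (hγ : ContDiffOn ℝ 1 γ (Icc a b)) {x : ℝ}
    (hx : x ∈ Ioo a b) : HasDerivAt γ (deriv γ x) x :=
  ((hγ.differentiableOn one_ne_zero x (Ioo_subset_Icc_self hx)).differentiableAt
    (Icc_mem_nhds hx.1 hx.2)).hasDerivAt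

theorem ContDiffOn.intervalIntegrable_comp_deriv (hab : a ≤ b)
    (hγ : ContDiffOn ℝ 1 γ (Icc a b)) {F : E × E → G} (hF : Continuous F) :
    IntervalIntegrable (fun s => F (γ s, deriv γ s)) volume a b := by
  rcases hab.eq_or_lt with rfl | hlt
  · exact IntervalIntegrable.refl
  have hcont : ContinuousOn (fun s => F (γ s, derivWithin γ (Icc a b) s)) (Icc a b) :=
    hF.comp_continuousOn
      (hγ.continuousOn.prodMk (hγ.continuousOn_derivWithin (uniqueDiffOn_Icc hlt) le_rfl))
  rw [intervalIntegrable_iff_integrableOn_Ioo_of_le hab]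
  refine (hcont.integrableOn_Icc.mono_set Ioo_subset_Icc_self).congr_fun
    (fun x hx => ?_) measurableSet_Ioo
  simp only [derivWithin_of_mem_nhds (Icc_mem_nhds hx.1 hx.2)]

theorem ContDiffOn.integral_deriv_eq_sub [CompleteSpace E] (hab : a ≤ b)
    (hγ : ContDiffOn ℝ 1 γ (Icc a b)) : ∫ s in a..b, deriv γ s = γ b - γ a :=
  integral_eq_sub_of_hasDeriv_right_of_le hab hγ.continuousOn
    (fun _ hx => (hγ.hasDerivAt_deriv_of_mem_Ioo hx).hasDerivWithinAt)
    (hγ.intervalIntegrable_comp_deriv hab continuous_snd)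

theorem PiecewiseC1On.exists_nat_partition (hγ : PiecewiseC1On γ a b) :
    ∃ (N : ℕ) (p : ℕ → ℝ), p 0 = a ∧ p N = b ∧
      ∀ k < N, p k ≤ p (k + 1) ∧ ContDiffOn ℝ 1 γ (Icc (p k) (p (k + 1))) := by
  obtain ⟨-, N, p, hp0, hpN, hmono, hC⟩ := hγ
  refine ⟨N, fun k => p ⟨min k N, by omega⟩, ?_, ?_, fun k hk => ?_⟩
  · simpa using hp0
  · simpa [Fin.last] using hpN
  · have hk' : k + 1 ≤ N := hk
    simp only [min_eq_left hk.le, min_eq_left hk']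
    exact ⟨hmono (Fin.castSucc_lt_succ (i := ⟨k, hk⟩)).le, hC ⟨k, hk⟩⟩

theorem PiecewiseC1On.intervalIntegrable_comp_deriv (hγ : PiecewiseC1On γ a b)
    {F : E × E → G} (hF : Continuous F) :
    IntervalIntegrable (fun s => F (γ s, deriv γ s)) volume a b := by
  obtain ⟨N, p, rfl, rfl, hp⟩ := hγ.exists_nat_partition
  exact IntervalIntegrable.trans_iterate fun k hk =>
    (hp k hk).2.intervalIntegrable_comp_deriv (hp k hk).1 hF

theorem PiecewiseC1On.integral_deriv_eq_sub [CompleteSpace E] (hγ : PiecewiseC1On γ a b) :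
    ∫ s in a..b, deriv γ s = γ b - γ a := by
  obtain ⟨N, p, rfl, rfl, hp⟩ := hγ.exists_nat_partition
  rw [← sum_integral_adjacent_intervals fun k hk =>
      (hp k hk).2.intervalIntegrable_comp_deriv (hp k hk).1 continuous_snd,
    Finset.sum_congr rfl fun k hk =>
      (hp k (Finset.mem_range.1 hk)).2.integral_deriv_eq_sub (hp k (Finset.mem_range.1 hk)).1,
    Finset.sum_range_sub (fun k => γ (p k))]

theorem ContDiff.piecewiseC1On (hγ : ContDiff ℝ 1 γ) (hab : a ≤ b) : PiecewiseC1On γ a b :=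
  ⟨hγ.continuous.continuousOn, 1, ![a, b], rfl, rfl, Fin.monotone_iff_le_succ.2 (by simpa),
    fun _ => hγ.contDiffOn⟩

end PiecewiseC1

theorem continuous_La (c : ℝ) : Continuous fun w : (ℝ × ℝ) × (ℝ × ℝ) => La c w.1 w.2 := by
  unfold La
  fun_prop

-- `m w − m² / 2` is the tangent to `w² / 2` at `w = m`.
theorem La_ge_tangent (c m : ℝ) (q v : ℝ × ℝ) : m * (v.2 - c) - m ^ 2 / 2 ≤ La c q v := by
  have := Real.cos_le_one (2 * Real.pi * q.1)
  unfold La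
  nlinarith [sq_nonneg (v.2 - c - m), sq_nonneg v.1]

theorem La_nonneg (c : ℝ) (q v : ℝ × ℝ) : 0 ≤ La c q v := by
  simpa using La_ge_tangent c 0 q v

theorem actionA_nonneg (c : ℝ) (γ : ℝ → ℝ × ℝ) {a b : ℝ} (hab : a ≤ b) :
    0 ≤ actionA c γ a b :=
  integral_nonneg hab fun s _ => La_nonneg c (γ s) (deriv γ s)

theorem sq_div_le_actionA (c : ℝ) {γ : ℝ → ℝ × ℝ} {a b : ℝ} (hab : a < b)
    (hγ : PiecewiseC1On γ a b) :
    ((γ b).2 - (γ a).2 - c * (b - a)) ^ 2 / (2 * (b - a)) ≤ actionA c γ a b := by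
  set D := (γ b).2 - (γ a).2 - c * (b - a)
  set m := D / (b - a)
  have hy : IntervalIntegrable (fun s => (deriv γ s).2) volume a b :=
    hγ.intervalIntegrable_comp_deriv (F := fun w => w.2.2) (by fun_prop)
  have hy_int : ∫ s in a..b, (deriv γ s).2 = (γ b).2 - (γ a).2 := by
    have := (ContinuousLinearMap.snd ℝ ℝ ℝ).intervalIntegral_comp_comm
      (hγ.intervalIntegrable_comp_deriv (F := Prod.snd) continuous_snd)
    simpa [hγ.integral_deriv_eq_sub] using this
  have htangent : IntervalIntegrable (fun s => m * ((deriv γ s).2 - c) - m ^ 2 / 2) volume a b :=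
    ((hy.sub intervalIntegrable_const).const_mul m).sub intervalIntegrable_const
  calc D ^ 2 / (2 * (b - a))
      = ∫ s in a..b, (m * ((deriv γ s).2 - c) - m ^ 2 / 2) := by
        rw [integral_sub ((hy.sub intervalIntegrable_const).const_mul m) intervalIntegrable_const,
          intervalIntegral.integral_const_mul, integral_sub hy intervalIntegrable_const, hy_int]
        simp only [intervalIntegral.integral_const, smul_eq_mul, m, D]
        field_simp [(sub_pos.2 hab).ne']
        ring
    _ ≤ actionA c γ a b :=
        integral_mono_on hab.le htangent
          (hγ.intervalIntegrable_comp_deriv (continuous_La c)) fun s _ => La_ge_tangent c m _ _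

theorem p2_surjective : Function.Surjective p2 := fun q =>
  let ⟨x, hx⟩ := QuotientAddGroup.mk_surjective q.1
  let ⟨y, hy⟩ := QuotientAddGroup.mk_surjective q.2
  ⟨(x, y), Prod.ext hx hy⟩

theorem AddCircle.coe_add_intCast_one (x : ℝ) (k : ℤ) :
    ((x + k : ℝ) : AddCircle (1 : ℝ)) = x := by
  rw [AddCircle.coe_add, add_eq_left, AddCircle.coe_eq_zero_iff]
  exact ⟨k, by simp⟩

theorem udelta_nonneg (δ : ℝ) : 0 ≤ udelta δ := fun _ => le_max_right _ _

theorem udelta_p2_zero {δ : ℝ} (hδ : δ ≤ 1 / 2) (x : ℝ) : udelta δ (p2 (x, 0)) = 0 := by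
  have : ‖((1 / 2 : ℝ) : AddCircle (1 : ℝ))‖ = 1 / 2 := by
    simpa using AddCircle.norm_half_period_eq (1 : ℝ)
  simp only [udelta, p2, QuotientAddGroup.mk_zero, zero_sub, norm_neg, this]
  exact max_eq_right (by linarith)

theorem sub_abs_le_udelta (δ : ℝ) {x y D : ℝ}
    (hyD : ((y + D : ℝ) : AddCircle (1 : ℝ)) = ((1 / 2 : ℝ) : AddCircle (1 : ℝ))) :
    δ - |D| ≤ udelta δ (p2 (x, y)) := by
  have h : (y : AddCircle (1 : ℝ)) - ((1 / 2 : ℝ) : AddCircle (1 : ℝ)) =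
      ((-D : ℝ) : AddCircle (1 : ℝ)) := by
    rw [← hyD, ← AddCircle.coe_sub]
    ring_nf
  have hnorm := QuotientAddGroup.norm_mk_le_norm (m := -D) (S := AddSubgroup.zmultiples (1 : ℝ))
  rw [Real.norm_eq_abs, abs_neg] at hnorm
  refine le_max_of_le_left ?_
  simp only [p2, h]
  linarith

section LaxOleinik

variable {c t : ℝ} {u : T2 → ℝ} {q : T2}

theorem Tlo_le (hu : 0 ≤ u) (ht : 0 ≤ t) {γ : ℝ → ℝ × ℝ} (hγ : PiecewiseC1On γ 0 t)
    (hq : p2 (γ t) = q) : Tlo c t u q ≤ u (p2 (γ 0)) + actionA c γ 0 t := by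
  refine csInf_le ⟨0, ?_⟩ ⟨γ, hγ, hq, rfl⟩
  rintro _ ⟨γ', -, -, rfl⟩
  exact add_nonneg (hu _) (actionA_nonneg c γ' ht)

theorem le_Tlo (ht : 0 ≤ t) {B : ℝ}
    (h : ∀ γ : ℝ → ℝ × ℝ, PiecewiseC1On γ 0 t → p2 (γ t) = q →
      B ≤ u (p2 (γ 0)) + actionA c γ 0 t) :
    B ≤ Tlo c t u q := by
  obtain ⟨x, rfl⟩ := p2_surjective q
  refine le_csInf ⟨_, fun _ => x, contDiff_const.piecewiseC1On ht, rfl, rfl⟩ ?_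
  rintro _ ⟨γ, hγ, hq, rfl⟩
  exact h γ hγ hq

theorem Tlo_nonneg (hu : 0 ≤ u) (ht : 0 ≤ t) : 0 ≤ Tlo c t u q :=
  le_Tlo ht fun γ _ _ => add_nonneg (hu _) (actionA_nonneg c γ ht)

end LaxOleinik

theorem Tlo_udelta_le {c δ t : ℝ} (hδ : δ ≤ 1 / 2) (ht : 0 < t) :
    Tlo c t (udelta δ) (p2 (0, 1 / 2)) ≤ 1 / (8 * t) := by
  -- a straight segment from `(0, 0)`, where `u_δ` vanishes, to the lift of `π(0, 1/2)` nearest to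
  -- the free drift `c t`
  set Y : ℝ := 1 / 2 + round (c * t - 1 / 2) with hY_def
  set γ : ℝ → ℝ × ℝ := fun s => (0, Y / t * s)
  have hderiv : deriv γ = fun _ => (0, Y / t) := funext fun s =>
    ((hasDerivAt_const s 0).prodMk ((hasDerivAt_id s).const_mul (Y / t))).deriv.trans (by simp)
  have hend : p2 (γ t) = p2 (0, 1 / 2) := by
    simp only [γ, p2, div_mul_cancel₀ Y ht.ne', Y, AddCircle.coe_add_intCast_one]
  have haction : actionA c γ 0 t = (Y - c * t) ^ 2 / (2 * t) := by
    simp only [actionA, hderiv, La, γ, mul_zero, Real.cos_zero, intervalIntegral.integral_const,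
      smul_eq_mul]
    field_simp
    ring
  have hY : (Y - c * t) ^ 2 ≤ (1 / 2) ^ 2 := by
    rw [hY_def]
    refine sq_le_sq' ?_ ?_ <;>
      linarith [abs_le.1 (abs_sub_round (c * t - 1 / 2))]
  have hγ : PiecewiseC1On γ 0 t :=
    (contDiff_const.prodMk (contDiff_const.mul contDiff_id)).piecewiseC1On ht.le
  calc Tlo c t (udelta δ) (p2 (0, 1 / 2))
      ≤ udelta δ (p2 (γ 0)) + actionA c γ 0 t := Tlo_le (udelta_nonneg δ) ht.le hγ hend
    _ = (Y - c * t) ^ 2 / (2 * t) := by simp [γ, udelta_p2_zero hδ, haction]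
    _ ≤ 1 / (8 * t) := by
        rw [div_le_div_iff₀ (by positivity) (by positivity)]
        nlinarith

theorem sq_div_le_max_sub_abs_add_sq_div {δ t D : ℝ} (hδ : 0 ≤ δ) (hδt : δ ≤ t) :
    δ ^ 2 / (2 * t) ≤ max (δ - |D|) 0 + D ^ 2 / (2 * t) := by
  rcases le_or_gt δ |D| with hD | hD
  · have : δ ^ 2 ≤ D ^ 2 := by simpa only [sq_abs] using pow_le_pow_left₀ hδ hD 2
    calc δ ^ 2 / (2 * t) ≤ D ^ 2 / (2 * t) := by gcongr; linarith
      _ ≤ _ := le_add_of_nonneg_left (le_max_right _ _)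
  · have ht : 0 < 2 * t := by linarith [abs_nonneg D]
    -- `δ² − D² = (δ − |D|)(δ + |D|)` and `δ + |D| < 2δ ≤ 2t`
    rw [max_eq_left (by linarith), ← sub_le_iff_le_add, ← sub_div, div_le_iff₀ ht]
    nlinarith [abs_nonneg D, sq_abs D]

theorem sq_div_le_Tlo_udelta {c δ t : ℝ} (hδ : 0 < δ) (hδt : δ ≤ t) {k : ℤ} (hk : c * t = k) :
    δ ^ 2 / (2 * t) ≤ Tlo c t (udelta δ) (p2 (0, 1 / 2)) := by
  have ht : 0 < t := hδ.trans_le hδt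
  refine le_Tlo ht.le fun γ hγ hq => ?_
  set D := (γ t).2 - (γ 0).2 - c * t
  have haction : D ^ 2 / (2 * t) ≤ actionA c γ 0 t := by
    simpa only [sub_zero] using sq_div_le_actionA c ht hγ
  have hyD : (((γ 0).2 + D : ℝ) : AddCircle (1 : ℝ)) = ((1 / 2 : ℝ) : AddCircle (1 : ℝ)) := by
    rw [show (γ 0).2 + D = (γ t).2 + ((-k : ℤ) : ℝ) by push_cast; linarith,
      AddCircle.coe_add_intCast_one]
    exact congrArg Prod.snd hq
  have hu : max (δ - |D|) 0 ≤ udelta δ (p2 (γ 0)) :=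
    max_le (sub_abs_le_udelta δ hyD) (udelta_nonneg δ _)
  linarith [sq_div_le_max_sub_abs_add_sq_div (D := D) hδ.le hδt]

theorem exists_tendsto_atTop_forall_le_mul_eq_intCast (c T : ℝ) :
    ∃ ts : ℕ → ℝ, Tendsto ts atTop atTop ∧ ∀ n, T ≤ ts n ∧ ∃ k : ℤ, c * ts n = k := by
  rcases eq_or_ne c 0 with rfl | hc
  · exact ⟨fun n => n + |T|, tendsto_atTop_add_const_right _ _ tendsto_natCast_atTop_atTop,
      fun n => ⟨by linarith [le_abs_self T, n.cast_nonneg (α := ℝ)], 0, by simp⟩⟩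
  have hc' : 0 < |c| := abs_pos.2 hc
  set N : ℕ := ⌈|c * T|⌉₊
  refine ⟨fun n => (n + N) / |c|, ?_, fun n => ⟨?_, ?_⟩⟩
  · exact (tendsto_atTop_add_const_right _ _ tendsto_natCast_atTop_atTop).atTop_div_const hc'
  · rw [le_div_iff₀ hc']
    nlinarith [le_abs_self T, Nat.le_ceil |c * T|, abs_mul c T, n.cast_nonneg (α := ℝ)]
  · rcases abs_choice c with h | h
    · exact ⟨n + N, by rw [h, mul_div_cancel₀ _ hc]; push_cast; ring⟩
    · exact ⟨-(n + N), by rw [h, mul_div_assoc', div_eq_iff (neg_ne_zero.2 hc)]; push_cast; ring⟩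

/-- For `L_a` on `𝕋²` and `u_δ` with `0 < δ < 1/2`:
`T_t u_δ (π(0,1/2)) → 0` as `t → +∞`, yet there is a sequence `t_n → +∞` with
`T_{t_n} u_δ (π(0,1/2)) ≥ δ²/(32 t_n)` for every `n`; hence the convergence of
the Lax–Oleinik semigroup at `π(0,1/2)` is not faster than `O(1/t)`. -/
theorem laxOleinik_rate_not_better_than_one_over_t (c δ : ℝ)
    (hδ0 : 0 < δ) (hδ : δ < 1 / 2) :
    Filter.Tendsto (fun t : ℝ => Tlo c t (udelta δ) (p2 (0, 1 / 2)))
      Filter.atTop (nhds 0) ∧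
    ∃ ts : ℕ → ℝ, Filter.Tendsto ts Filter.atTop Filter.atTop ∧
      ∀ n : ℕ, 0 < ts n ∧
        δ ^ 2 / (32 * ts n) ≤ Tlo c (ts n) (udelta δ) (p2 (0, 1 / 2)) := by
  refine ⟨?_, ?_⟩
  · have hbound : Tendsto (fun t : ℝ => 1 / (8 * t)) atTop (nhds 0) :=
      tendsto_const_nhds.div_atTop (tendsto_id.const_mul_atTop (by norm_num))
    refine tendsto_of_tendsto_of_tendsto_of_le_of_le' tendsto_const_nhds hbound ?_ ?_
    · filter_upwards [eventually_ge_atTop 0] with t ht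
      exact Tlo_nonneg (udelta_nonneg δ) ht
    · filter_upwards [eventually_gt_atTop 0] with t ht
      exact Tlo_udelta_le hδ.le ht
  · obtain ⟨ts, hts, hle⟩ := exists_tendsto_atTop_forall_le_mul_eq_intCast c δ
    refine ⟨ts, hts, fun n => ?_⟩
    obtain ⟨hδt, k, hk⟩ := hle n
    have hpos : 0 < ts n := hδ0.trans_le hδt
    refine ⟨hpos, le_trans ?_ (sq_div_le_Tlo_udelta hδ0 hδt hk)⟩
    gcongr
    norm_num
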